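/- For subspaces A, B, C, D, E of a finite-dimensional vector space V, I(A;B) ≤ I(A;B|C) + I(A;C|D) + I(A;D|E) + I(B;E), where I(X;Y) = dim X + dim Y - dim(X+Y) and I(X;Y|T) = dim(X+T) + dim(Y+T) - dim(X+Y+T) - dim T. -/

import Mathlib

/-!
Both sides are computed from intersections: `I(X;Y) = dim (X ⊓ Y)` by the modular law, and
`I(X;Y|T) = dim ((X ⊔ T) ⊓ (Y ⊔ T)) - dim T`. Hence any `W ≤ X ⊓ Y` gives
`I(X;Y|T) ≥ dim (W ⊔ T) - dim T = dim W - dim (W ⊓ T)`. Along the descending chain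
`A ⊓ B ≥ A ⊓ B ⊓ C ≥ A ⊓ B ⊓ C ⊓ D ≥ A ⊓ B ⊓ C ⊓ D ⊓ E` the three conditional terms bound the
successive drops in dimension, and `I(B;E)` bounds the dimension of the last term, so the sum
telescopes to `dim (A ⊓ B) = I(A;B)`.
-/

open Module

noncomputable def condH {F V : Type*} [Field F] [AddCommGroup V] [Module F V]
    (X Y : Submodule F V) : ℤ :=
  (finrank F ↑(X ⊔ Y) : ℤ) - finrank F ↑Y

noncomputable def mutI {F V : Type*} [Field F] [AddCommGroup V] [Module F V]
    (X Y : Submodule F V) : ℤ :=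
  (finrank F ↑X : ℤ) + finrank F ↑Y - finrank F ↑(X ⊔ Y)

noncomputable def condI {F V : Type*} [Field F] [AddCommGroup V] [Module F V]
    (X Y T : Submodule F V) : ℤ :=
  (finrank F ↑(X ⊔ T) : ℤ) + finrank F ↑(Y ⊔ T) - finrank F ↑(X ⊔ Y ⊔ T) - finrank F ↑T

section

variable {F V : Type*} [Field F] [AddCommGroup V] [Module F V] [FiniteDimensional F V]

theorem mutI_eq_finrank_inf (X Y : Submodule F V) : mutI X Y = finrank F ↑(X ⊓ Y) := by
  have := Submodule.finrank_sup_add_finrank_inf_eq X Y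
  unfold mutI
  omega

theorem finrank_le_mutI {W X Y : Submodule F V} (hW : W ≤ X ⊓ Y) :
    (finrank F ↑W : ℤ) ≤ mutI X Y := by
  rw [mutI_eq_finrank_inf]
  exact_mod_cast Submodule.finrank_mono hW

theorem condI_eq_finrank_inf_sub (X Y T : Submodule F V) :
    condI X Y T = finrank F ↑((X ⊔ T) ⊓ (Y ⊔ T)) - finrank F ↑T := by
  have h := Submodule.finrank_sup_add_finrank_inf_eq (X ⊔ T) (Y ⊔ T)
  rw [sup_sup_sup_comm, sup_idem] at h
  unfold condI
  omega

theorem finrank_sub_finrank_inf_le_condI {W X Y : Submodule F V} (T : Submodule F V)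
    (hW : W ≤ X ⊓ Y) : (finrank F ↑W : ℤ) - finrank F ↑(W ⊓ T) ≤ condI X Y T := by
  have hWT : W ⊔ T ≤ (X ⊔ T) ⊓ (Y ⊔ T) :=
    le_inf (sup_le_sup_right (hW.trans inf_le_left) T) (sup_le_sup_right (hW.trans inf_le_right) T)
  have hmono := Submodule.finrank_mono hWT
  have hmod := Submodule.finrank_sup_add_finrank_inf_eq W T
  rw [condI_eq_finrank_inf_sub]
  omega

end

theorem stmt7 {F V : Type*} [Field F] [AddCommGroup V] [Module F V] [FiniteDimensional F V]
    (A B C D E : Submodule F V) :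
    mutI A B ≤ condI A B C + condI A C D + condI A D E + mutI B E := by
  have drop_C := finrank_sub_finrank_inf_le_condI (W := A ⊓ B) C le_rfl
  have drop_D := finrank_sub_finrank_inf_le_condI (W := A ⊓ B ⊓ C) D
    (le_inf (inf_le_left.trans inf_le_left) inf_le_right)
  have drop_E := finrank_sub_finrank_inf_le_condI (W := A ⊓ B ⊓ C ⊓ D) E
    (le_inf (inf_le_left.trans (inf_le_left.trans inf_le_left)) inf_le_right)
  have last := finrank_le_mutI (W := A ⊓ B ⊓ C ⊓ D ⊓ E) (X := B) (Y := E)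
    (le_inf (inf_le_left.trans (inf_le_left.trans (inf_le_left.trans inf_le_right))) inf_le_right)
  rw [mutI_eq_finrank_inf]
  linarith
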